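/- arXiv:2412.06311 — 2 statements merged into one kernel-verified Lean document; each statement's English description precedes it below -/
import Mathlib

section
/- Let 𝒳 ⊆ ℝ^p be a Borel set, K : 𝒳 × 𝒳 → ℝ a measurable symmetric kernel, and define ρ(x, y) = K(x, x) + K(y, y) − 2K(x, y). Let P, Q be Borel probability measures on 𝒳 such that x ↦ K(x, x) is integrable with respect to P and with respect to Q, and (x, y) ↦ K(x, y) is integrable with respect to P × P, P × Q, and Q × Q. Then −[∫∫ ρ dP dP − 2 ∫∫ ρ dP dQ + ∫∫ ρ dQ dQ] = 2[∫∫ K dP dP − 2 ∫∫ K dP dQ + ∫∫ K dQ dQ]. -/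
open MeasureTheory

lemma double_int_rho {α : Type*} [MeasurableSpace α] (K : α → α → ℝ)
    (μ ν : Measure α) [IsProbabilityMeasure μ] [IsProbabilityMeasure ν]
    (hdμ : Integrable (fun x => K x x) μ) (hdν : Integrable (fun x => K x x) ν)
    (hμν : Integrable (fun q : α × α => K q.1 q.2) (μ.prod ν)) :
    ∫ x, ∫ y, (K x x + K y y - 2 * K x y) ∂ν ∂μ
      = (∫ x, K x x ∂μ) + (∫ y, K y y ∂ν) - 2 * ∫ x, ∫ y, K x y ∂ν ∂μ := by
  have hae : ∀ᵐ x ∂μ, Integrable (fun y => K x y) ν := hμν.prod_right_ae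
  have hg : Integrable (fun x => ∫ y, K x y ∂ν) μ := hμν.integral_prod_left
  have h1 : ∫ x, ∫ y, (K x x + K y y - 2 * K x y) ∂ν ∂μ
      = ∫ x, (K x x + (∫ y, K y y ∂ν) - 2 * ∫ y, K x y ∂ν) ∂μ := by
    refine integral_congr_ae ?_
    filter_upwards [hae] with x hx
    have i1 : Integrable (fun y => K x x + K y y) ν := (integrable_const _).add hdν
    have i2 : Integrable (fun y => 2 * K x y) ν := hx.const_mul 2
    rw [integral_sub i1 i2, integral_add (integrable_const _) hdν, integral_const,
      integral_const_mul]
    simp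
  have j1 : Integrable (fun x => K x x + ∫ y, K y y ∂ν) μ := hdμ.add (integrable_const _)
  have j2 : Integrable (fun x => 2 * ∫ y, K x y ∂ν) μ := hg.const_mul 2
  rw [h1, integral_sub j1 j2, integral_add hdμ (integrable_const _), integral_const,
    integral_const_mul]
  simp

/-- If the kernel `K` generates the semimetric `ρ(x,y) = K(x,x) + K(y,y) - 2K(x,y)`, then the
`ρ`-based discrepancy is twice the `K`-based discrepancy (SID_ρ = 2 SID_K at each time). -/
theorem semimetric_discrepancy_eq_two_mul_kernel_discrepancy
    {p : ℕ} (𝒳 : Set (Fin p → ℝ)) (h𝒳 : MeasurableSet 𝒳)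
    (K : 𝒳 → 𝒳 → ℝ)
    (hKmeas : Measurable (fun q : 𝒳 × 𝒳 => K q.1 q.2))
    (hKsymm : ∀ x y : 𝒳, K x y = K y x)
    (ρ : 𝒳 → 𝒳 → ℝ) (hρ : ∀ x y : 𝒳, ρ x y = K x x + K y y - 2 * K x y)
    (P Q : Measure 𝒳) [IsProbabilityMeasure P] [IsProbabilityMeasure Q]
    (hdP : Integrable (fun x : 𝒳 => K x x) P)
    (hdQ : Integrable (fun x : 𝒳 => K x x) Q)
    (hPP : Integrable (fun q : 𝒳 × 𝒳 => K q.1 q.2) (P.prod P))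
    (hPQ : Integrable (fun q : 𝒳 × 𝒳 => K q.1 q.2) (P.prod Q))
    (hQQ : Integrable (fun q : 𝒳 × 𝒳 => K q.1 q.2) (Q.prod Q)) :
    -((∫ x, ∫ y, ρ x y ∂P ∂P) - 2 * (∫ x, ∫ y, ρ x y ∂Q ∂P) +
        (∫ x, ∫ y, ρ x y ∂Q ∂Q)) =
      2 * ((∫ x, ∫ y, K x y ∂P ∂P) - 2 * (∫ x, ∫ y, K x y ∂Q ∂P) +
        (∫ x, ∫ y, K x y ∂Q ∂Q)) := by
  simp only [hρ]
  rw [double_int_rho K P P hdP hdP hPP, double_int_rho K P Q hdP hdQ hPQ,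
    double_int_rho K Q Q hdQ hdQ hQQ]
  ring
end

section
/- Let n ≥ 1, and let Y₁, …, Y_n ∈ ℝ, δ₁, …, δ_n ∈ ℝ, a measurable function W_h : ℝ → ℝ, and real numbers K_{ij} (i, j ∈ {1, …, n}) with K_{ij} = K_{ji} be given. Set b_{ijk} = δ_i W_h(Y_i − Y_k) 1{Y_j ≥ Y_k}, and for t ∈ ℝ define S̃₁(t) = n^{-4} (Σ_{i,j} K_{ij} W_h(Y_i − t) δ_i W_h(Y_j − t) δ_j)(Σ_{i,j} 1{Y_i ≥ t} 1{Y_j ≥ t}), S̃₂(t) = n^{-4} (Σ_{i,j} K_{ij} W_h(Y_i − t) δ_i 1{Y_j ≥ t})(Σ_{i,j} W_h(Y_i − t) δ_i 1{Y_j ≥ t}), and S̃₃(t) = n^{-4} (Σ_{i,j} K_{ij} 1{Y_i ≥ t} 1{Y_j ≥ t})(Σ_{i,j} W_h(Y_i − t) δ_i W_h(Y_j − t) δ_j). Then (1/n) Σ_{k=1}^n [S̃₁(Y_k) − 2 S̃₂(Y_k) + S̃₃(Y_k)] δ_k = n^{-5} Σ_{i,j,k,l,r=1}^n (b_{ikr}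 − b_{kir}) K_{ij} (b_{jlr} − b_{ljr}) δ_r. -/
open Finset

/-- The plug-in estimator of SID_K is a V-statistic of order five: the algebraic identity
`(1/n) Σ_k [S̃₁(Y_k) − 2S̃₂(Y_k) + S̃₃(Y_k)] δ_k
   = n^{-5} Σ_{i,j,k,l,r} (b_{ikr} − b_{kir}) K_{ij} (b_{jlr} − b_{ljr}) δ_r`. -/
theorem plugin_estimator_is_V_statistic (n : ℕ) (hn : 1 ≤ n)
    (Y δ : Fin n → ℝ) (Wh : ℝ → ℝ) (K : Fin n → Fin n → ℝ)
    (hK : ∀ i j, K i j = K j i)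
    (b : Fin n → Fin n → Fin n → ℝ)
    (hb : ∀ i j k, b i j k = δ i * Wh (Y i - Y k) * (if Y k ≤ Y j then (1 : ℝ) else 0))
    (S₁ S₂ S₃ : ℝ → ℝ)
    (hS₁ : ∀ t, S₁ t = ((n : ℝ))⁻¹ ^ 4 *
      ((∑ i, ∑ j, K i j * Wh (Y i - t) * δ i * Wh (Y j - t) * δ j) *
        (∑ i, ∑ j, (if t ≤ Y i then (1 : ℝ) else 0) * (if t ≤ Y j then (1 : ℝ) else 0))))
    (hS₂ : ∀ t, S₂ t = ((n : ℝ))⁻¹ ^ 4 *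
      ((∑ i, ∑ j, K i j * Wh (Y i - t) * δ i * (if t ≤ Y j then (1 : ℝ) else 0)) *
        (∑ i, ∑ j, Wh (Y i - t) * δ i * (if t ≤ Y j then (1 : ℝ) else 0))))
    (hS₃ : ∀ t, S₃ t = ((n : ℝ))⁻¹ ^ 4 *
      ((∑ i, ∑ j, K i j * (if t ≤ Y i then (1 : ℝ) else 0) * (if t ≤ Y j then (1 : ℝ) else 0)) *
        (∑ i, ∑ j, Wh (Y i - t) * δ i * Wh (Y j - t) * δ j))) :
    ((n : ℝ))⁻¹ * (∑ k, (S₁ (Y k) - 2 * S₂ (Y k) + S₃ (Y k)) * δ k) =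
      ((n : ℝ))⁻¹ ^ 5 * (∑ i, ∑ j, ∑ k, ∑ l, ∑ r,
        (b i k r - b k i r) * K i j * (b j l r - b l j r) * δ r) := by
  have key : ∀ r : Fin n, S₁ (Y r) - 2 * S₂ (Y r) + S₃ (Y r)
      = ((n : ℝ))⁻¹ ^ 4 * ∑ i, ∑ j, ∑ k, ∑ l,
          (b i k r - b k i r) * K i j * (b j l r - b l j r) := by
    intro r
    set t := Y r with ht
    have hbd : ∀ i k : Fin n, b i k r - b k i r
        = (Wh (Y i - t) * δ i) * (if t ≤ Y k then (1:ℝ) else 0)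
          - (Wh (Y k - t) * δ k) * (if t ≤ Y i then (1:ℝ) else 0) := by
      intro i k
      simp only [hb, ht]
      ring
    set A : Fin n → ℝ := fun i => Wh (Y i - t) * δ i with hA
    set B : Fin n → ℝ := fun i => if t ≤ Y i then (1:ℝ) else 0 with hB
    have hbd' : ∀ i k : Fin n, b i k r - b k i r = A i * B k - A k * B i := hbd
    have hsum : ∑ i, ∑ j, ∑ k, ∑ l, (b i k r - b k i r) * K i j * (b j l r - b l j r)
        = (∑ i, B i) * (∑ i, B i) * (∑ i, ∑ j, K i j * A i * A j)
          - 2 * ((∑ i, A i) * (∑ i, B i) * (∑ i, ∑ j, K i j * A i * B j))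
          + (∑ i, A i) * (∑ i, A i) * (∑ i, ∑ j, K i j * B i * B j) := by
      have h1 : ∀ i j : Fin n, ∑ k, ∑ l, (b i k r - b k i r) * K i j * (b j l r - b l j r)
          = (A i * (∑ x, B x) - (∑ x, A x) * B i) * K i j
            * (A j * (∑ x, B x) - (∑ x, A x) * B j) := by
        intro i j
        have hk : ∀ i : Fin n, ∑ k, (b i k r - b k i r) = A i * (∑ x, B x) - (∑ x, A x) * B i := by
          intro i
          simp only [hbd']
          rw [Finset.sum_sub_distrib, ← Finset.mul_sum, ← Finset.sum_mul]
        calc ∑ k, ∑ l, (b i k r - b k i r) * K i j * (b j l r - b l j r)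
            = ∑ k, ((b i k r - b k i r) * K i j * ∑ l, (b j l r - b l j r)) := by
              refine Finset.sum_congr rfl fun k _ => ?_
              rw [Finset.mul_sum]
          _ = (∑ k, (b i k r - b k i r)) * K i j * (∑ l, (b j l r - b l j r)) := by
              rw [← Finset.sum_mul, ← Finset.sum_mul]
          _ = _ := by rw [hk i, hk j]
      have hcross : ∑ i, ∑ j, K i j * B i * A j = ∑ i, ∑ j, K i j * A i * B j := by
        rw [Finset.sum_comm]
        refine Finset.sum_congr rfl fun i _ => Finset.sum_congr rfl fun j _ => ?_
        rw [hK]; ring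
      calc ∑ i, ∑ j, ∑ k, ∑ l, (b i k r - b k i r) * K i j * (b j l r - b l j r)
          = ∑ i, ∑ j, ((A i * (∑ x, B x) - (∑ x, A x) * B i) * K i j
              * (A j * (∑ x, B x) - (∑ x, A x) * B j)) :=
            Finset.sum_congr rfl fun i _ => Finset.sum_congr rfl fun j _ => h1 i j
        _ = ∑ i, ∑ j, ((∑ x, B x) * (∑ x, B x) * (K i j * A i * A j)
              - (∑ x, A x) * (∑ x, B x) * (K i j * A i * B j)
              - (∑ x, A x) * (∑ x, B x) * (K i j * B i * A j)
              + (∑ x, A x) * (∑ x, A x) * (K i j * B i * B j)) := by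
            refine Finset.sum_congr rfl fun i _ => Finset.sum_congr rfl fun j _ => ?_
            ring
        _ = (∑ x, B x) * (∑ x, B x) * (∑ i, ∑ j, K i j * A i * A j)
              - (∑ x, A x) * (∑ x, B x) * (∑ i, ∑ j, K i j * A i * B j)
              - (∑ x, A x) * (∑ x, B x) * (∑ i, ∑ j, K i j * B i * A j)
              + (∑ x, A x) * (∑ x, A x) * (∑ i, ∑ j, K i j * B i * B j) := by
            simp only [Finset.sum_add_distrib, Finset.sum_sub_distrib, ← Finset.mul_sum]
        _ = _ := by rw [hcross]; ring
    have fB : (∑ i : Fin n, ∑ j,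
          (if t ≤ Y i then (1:ℝ) else 0) * (if t ≤ Y j then (1:ℝ) else 0))
        = (∑ i, B i) * (∑ i, B i) := by
      rw [Finset.sum_mul_sum]
    have fA : (∑ i : Fin n, ∑ j, Wh (Y i - t) * δ i * Wh (Y j - t) * δ j)
        = (∑ i, A i) * (∑ i, A i) := by
      rw [Finset.sum_mul_sum]
      exact Finset.sum_congr rfl fun i _ => Finset.sum_congr rfl fun j _ => by
        simp only [hA]; ring
    have fAB : (∑ i : Fin n, ∑ j, Wh (Y i - t) * δ i * (if t ≤ Y j then (1:ℝ) else 0))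
        = (∑ i, A i) * (∑ i, B i) := by
      rw [Finset.sum_mul_sum]
    have tAA : (∑ i : Fin n, ∑ j, K i j * Wh (Y i - t) * δ i * Wh (Y j - t) * δ j)
        = ∑ i, ∑ j, K i j * A i * A j :=
      Finset.sum_congr rfl fun i _ => Finset.sum_congr rfl fun j _ => by
        simp only [hA]; ring
    have tAB : (∑ i : Fin n, ∑ j, K i j * Wh (Y i - t) * δ i * (if t ≤ Y j then (1:ℝ) else 0))
        = ∑ i, ∑ j, K i j * A i * B j :=
      Finset.sum_congr rfl fun i _ => Finset.sum_congr rfl fun j _ => by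
        simp only [hA, hB]; ring
    have tBB : (∑ i : Fin n, ∑ j,
          K i j * (if t ≤ Y i then (1:ℝ) else 0) * (if t ≤ Y j then (1:ℝ) else 0))
        = ∑ i, ∑ j, K i j * B i * B j :=
      Finset.sum_congr rfl fun i _ => Finset.sum_congr rfl fun j _ => by
        simp only [hB]
    rw [hS₁ t, hS₂ t, hS₃ t, fB, fA, fAB, tAA, tAB, tBB, hsum]
    ring
  -- reorder the quintuple sum so that `r` is outermost
  have swap : ∑ i, ∑ j, ∑ k, ∑ l, ∑ r,
        (b i k r - b k i r) * K i j * (b j l r - b l j r) * δ r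
      = ∑ r, (∑ i, ∑ j, ∑ k, ∑ l,
          (b i k r - b k i r) * K i j * (b j l r - b l j r)) * δ r := by
    have s4 : ∀ i j k : Fin n, ∑ l, ∑ r : Fin n,
          (b i k r - b k i r) * K i j * (b j l r - b l j r) * δ r
        = ∑ r, ∑ l, (b i k r - b k i r) * K i j * (b j l r - b l j r) * δ r :=
      fun _ _ _ => Finset.sum_comm
    have s3 : ∀ i j : Fin n, ∑ k, ∑ r : Fin n, ∑ l,
          (b i k r - b k i r) * K i j * (b j l r - b l j r) * δ r
        = ∑ r, ∑ k, ∑ l, (b i k r - b k i r) * K i j * (b j l r - b l j r) * δ r :=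
      fun _ _ => Finset.sum_comm
    have s2 : ∀ i : Fin n, ∑ j, ∑ r : Fin n, ∑ k, ∑ l,
          (b i k r - b k i r) * K i j * (b j l r - b l j r) * δ r
        = ∑ r, ∑ j, ∑ k, ∑ l, (b i k r - b k i r) * K i j * (b j l r - b l j r) * δ r :=
      fun _ => Finset.sum_comm
    calc ∑ i, ∑ j, ∑ k, ∑ l, ∑ r,
          (b i k r - b k i r) * K i j * (b j l r - b l j r) * δ r
        = ∑ i, ∑ j, ∑ k, ∑ r, ∑ l,
            (b i k r - b k i r) * K i j * (b j l r - b l j r) * δ r :=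
          Finset.sum_congr rfl fun i _ => Finset.sum_congr rfl fun j _ =>
            Finset.sum_congr rfl fun k _ => s4 i j k
      _ = ∑ i, ∑ j, ∑ r, ∑ k, ∑ l,
            (b i k r - b k i r) * K i j * (b j l r - b l j r) * δ r :=
          Finset.sum_congr rfl fun i _ => Finset.sum_congr rfl fun j _ => s3 i j
      _ = ∑ i, ∑ r, ∑ j, ∑ k, ∑ l,
            (b i k r - b k i r) * K i j * (b j l r - b l j r) * δ r :=
          Finset.sum_congr rfl fun i _ => s2 i
      _ = ∑ r, ∑ i, ∑ j, ∑ k, ∑ l,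
            (b i k r - b k i r) * K i j * (b j l r - b l j r) * δ r :=
          Finset.sum_comm
      _ = ∑ r, (∑ i, ∑ j, ∑ k, ∑ l,
            (b i k r - b k i r) * K i j * (b j l r - b l j r)) * δ r := by
          refine Finset.sum_congr rfl fun r _ => ?_
          simp only [Finset.sum_mul]
  rw [swap, Finset.mul_sum, Finset.mul_sum]
  refine Finset.sum_congr rfl fun r _ => ?_
  rw [key r]
  ring
end
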